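/- arXiv:0903.5066 — 6 statements merged into one kernel-verified Lean document; each statement's English description precedes it below -/
import Mathlib

section
/- Let x be a sparse vector with support N = T ∪ Δ \ Δₑ, where Δ and T are disjoint and Δₑ ⊆ T, |T| = k, |Δ| = u. Let y = Ax. If δ_{k+2u}(A) < 1, then x is the unique minimizer of ‖β_{T^c}‖₀ subject to y = Aβ. -/
open Matrix BigOperators Finset

noncomputable def cols {m n : ℕ} (A : Matrix (Fin m) (Fin n) ℝ) (T : Finset (Fin n)) :
    Matrix (Fin m) {j // j ∈ T} ℝ :=
  Matrix.of fun i j => A i j.1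

noncomputable def l2 {ι : Type*} [Fintype ι] (v : ι → ℝ) : ℝ :=
  Real.sqrt (∑ i, v i ^ 2)

/-- `δ` is a valid `S`-restricted-isometry bound for `A`. -/
def RIPBound {m n : ℕ} (A : Matrix (Fin m) (Fin n) ℝ) (S : ℕ) (δ : ℝ) : Prop :=
  ∀ T : Finset (Fin n), T.card ≤ S → ∀ c : {j // j ∈ T} → ℝ,
    (1 - δ) * (∑ j, c j ^ 2) ≤ (∑ i, ((cols A T).mulVec c i) ^ 2) ∧
    (∑ i, ((cols A T).mulVec c i) ^ 2) ≤ (1 + δ) * (∑ j, c j ^ 2)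

/-- The `S`-restricted isometry constant `δ_S(A)`: the smallest valid RIP bound. -/
noncomputable def ripConst {m n : ℕ} (A : Matrix (Fin m) (Fin n) ℝ) (S : ℕ) : ℝ :=
  sInf {δ : ℝ | 0 ≤ δ ∧ RIPBound A S δ}

/-- `θ` is a valid `(S₁,S₂)`-restricted-orthogonality bound for `A`. -/
def ROCBound {m n : ℕ} (A : Matrix (Fin m) (Fin n) ℝ) (S₁ S₂ : ℕ) (θ : ℝ) : Prop :=
  ∀ T₁ T₂ : Finset (Fin n), Disjoint T₁ T₂ → T₁.card ≤ S₁ → T₂.card ≤ S₂ →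
    ∀ c₁ : {j // j ∈ T₁} → ℝ, ∀ c₂ : {j // j ∈ T₂} → ℝ,
      |∑ i, (cols A T₁).mulVec c₁ i * (cols A T₂).mulVec c₂ i| ≤ θ * l2 c₁ * l2 c₂

/-- The restricted orthogonality constant `θ_{S₁,S₂}(A)`. -/
noncomputable def rocConst {m n : ℕ} (A : Matrix (Fin m) (Fin n) ℝ) (S₁ S₂ : ℕ) : ℝ :=
  sInf {θ : ℝ | 0 ≤ θ ∧ ROCBound A S₁ S₂ θ}

/-- `a_k(S, Š)` from Modified-CS. -/
noncomputable def aConst {m n : ℕ} (A : Matrix (Fin m) (Fin n) ℝ) (k S S' : ℕ) : ℝ :=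
  (rocConst A S' S + rocConst A S' k * rocConst A S k / (1 - ripConst A k)) /
    (1 - ripConst A S - (rocConst A S k) ^ 2 / (1 - ripConst A k))

/-- `M = I - A_T (A_Tᵀ A_T)⁻¹ A_Tᵀ`, projection onto orthogonal complement of span of `A_T`. -/
noncomputable def projM {m n : ℕ} (A : Matrix (Fin m) (Fin n) ℝ) (T : Finset (Fin n)) :
    Matrix (Fin m) (Fin m) ℝ :=
  1 - cols A T * ((cols A T)ᵀ * cols A T)⁻¹ * (cols A T)ᵀ


lemma ripBound_exists {m n : ℕ} (A : Matrix (Fin m) (Fin n) ℝ) (S : ℕ) :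
    ∃ δ : ℝ, 0 ≤ δ ∧ RIPBound A S δ := by
  set B : ℝ := ∑ i, ∑ j, (A i j) ^ 2 with hBdef
  have hB : 0 ≤ B := Finset.sum_nonneg fun i _ => Finset.sum_nonneg fun j _ => sq_nonneg _
  refine ⟨1 + B, by linarith, ?_⟩
  intro T hTc c
  have hc2 : (0:ℝ) ≤ ∑ j, c j ^ 2 := Finset.sum_nonneg fun j _ => sq_nonneg _
  constructor
  · have : (0:ℝ) ≤ ∑ i, ((cols A T).mulVec c i) ^ 2 :=
      Finset.sum_nonneg fun i _ => sq_nonneg _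
    nlinarith
  · have key : ∀ i, ((cols A T).mulVec c i) ^ 2 ≤ (∑ j, (A i j) ^ 2) * ∑ j, c j ^ 2 := by
      intro i
      have cs := Finset.sum_mul_sq_le_sq_mul_sq Finset.univ
        (fun j : {j // j ∈ T} => A i j.1) c
      have h1 : ((cols A T).mulVec c i) ^ 2
          = (∑ j : {j // j ∈ T}, A i j.1 * c j) ^ 2 := by
        simp [cols, Matrix.mulVec, dotProduct]
      rw [h1]
      refine le_trans cs ?_
      have h2 : (∑ j : {j // j ∈ T}, (A i j.1) ^ 2) ≤ ∑ j, (A i j) ^ 2 := by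
        rw [Finset.sum_coe_sort T (fun j => (A i j) ^ 2)]
        exact Finset.sum_le_sum_of_subset_of_nonneg (Finset.subset_univ T)
          (fun j _ _ => sq_nonneg _)
      exact mul_le_mul_of_nonneg_right h2 hc2
    calc (∑ i, ((cols A T).mulVec c i) ^ 2)
        ≤ ∑ i, (∑ j, (A i j) ^ 2) * ∑ j, c j ^ 2 := Finset.sum_le_sum fun i _ => key i
      _ = B * ∑ j, c j ^ 2 := by rw [← Finset.sum_mul]
      _ ≤ (1 + (1 + B)) * ∑ j, c j ^ 2 := by nlinarith

theorem stmt1 {m n k u : ℕ} (A : Matrix (Fin m) (Fin n) ℝ)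
    (T Δ Δₑ : Finset (Fin n)) (x : Fin n → ℝ)
    (hd : Disjoint T Δ) (he : Δₑ ⊆ T)
    (hT : T.card = k) (hu : Δ.card = u)
    (hsupp : Function.support x = ↑((T ∪ Δ) \ Δₑ))
    (hrip : ripConst A (k + 2 * u) < 1) :
    ∀ β : Fin n → ℝ, A.mulVec β = A.mulVec x → β ≠ x →
      ((Tᶜ).filter fun j => x j ≠ 0).card < ((Tᶜ).filter fun j => β j ≠ 0).card := by
  intro β hAβ hne
  by_contra hcon
  push_neg at hcon
  have hxmem : ∀ j, x j ≠ 0 ↔ j ∈ (T ∪ Δ) \ Δₑ := by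
    intro j
    rw [← Finset.mem_coe, ← hsupp, Function.mem_support]
  have hxfilter : (Tᶜ).filter (fun j => x j ≠ 0) = Δ := by
    ext j
    simp only [Finset.mem_filter, Finset.mem_compl, hxmem, Finset.mem_sdiff,
      Finset.mem_union]
    constructor
    · rintro ⟨hjT, ⟨hTΔ, _⟩⟩
      tauto
    · intro hjΔ
      have hjT : j ∉ T := fun hjT => (Finset.disjoint_left.mp hd) hjT hjΔ
      exact ⟨hjT, ⟨Or.inr hjΔ, fun hje => hjT (he hje)⟩⟩
  rw [hxfilter, hu] at hcon
  set D := (Tᶜ).filter (fun j => β j ≠ 0) with hDdef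
  set S := T ∪ Δ ∪ D with hSdef
  have hScard : S.card ≤ k + 2 * u := by
    have h1 : (T ∪ Δ).card = k + u := by
      rw [Finset.card_union_of_disjoint hd, hT, hu]
    calc S.card ≤ (T ∪ Δ).card + D.card := Finset.card_union_le _ _
      _ ≤ (k + u) + u := by rw [h1]; exact Nat.add_le_add_left hcon _
      _ = k + 2 * u := by ring
  set h : Fin n → ℝ := fun j => β j - x j with hhdef
  have hvanish : ∀ j, j ∉ S → h j = 0 := by
    intro j hjS
    simp only [hSdef, Finset.mem_union, not_or] at hjS
    obtain ⟨⟨hjT, hjΔ⟩, hjD⟩ := hjS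
    have hβ : β j = 0 := by
      by_contra hβne
      exact hjD (Finset.mem_filter.mpr ⟨Finset.mem_compl.mpr hjT, hβne⟩)
    have hx : x j = 0 := by
      by_contra hxne
      have := (hxmem j).mp hxne
      rw [Finset.mem_sdiff, Finset.mem_union] at this
      tauto
    simp [hhdef, hβ, hx]
  have hAh : A.mulVec h = 0 := by
    have : A.mulVec h = A.mulVec β - A.mulVec x := by
      ext i
      simp [hhdef, Matrix.mulVec, dotProduct, Finset.sum_sub_distrib, mul_sub]
    rw [this, hAβ, sub_self]
  -- get a RIP bound δ < 1
  have hne' : {δ : ℝ | 0 ≤ δ ∧ RIPBound A (k + 2 * u) δ}.Nonempty := by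
    obtain ⟨δ, hδ⟩ := ripBound_exists A (k + 2 * u)
    exact ⟨δ, hδ⟩
  obtain ⟨δ, ⟨hδ0, hδRIP⟩, hδ1⟩ := exists_lt_of_csInf_lt hne' hrip
  set c : {j // j ∈ S} → ℝ := fun j => h j.1 with hcdef
  have hmv : ∀ i, (cols A S).mulVec c i = A.mulVec h i := by
    intro i
    have e1 : (cols A S).mulVec c i = ∑ j : {j // j ∈ S}, A i j.1 * h j.1 := by
      simp [cols, Matrix.mulVec, dotProduct, hcdef]
    rw [e1, Finset.sum_coe_sort S (fun j => A i j * h j)]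
    rw [show A.mulVec h i = ∑ j, A i j * h j by simp [Matrix.mulVec, dotProduct]]
    refine Finset.sum_subset (Finset.subset_univ S) ?_
    intro j _ hjS
    rw [hvanish j hjS, mul_zero]
  have hzero : (∑ i, ((cols A S).mulVec c i) ^ 2) = 0 := by
    apply Finset.sum_eq_zero
    intro i _
    rw [hmv i, hAh]
    simp
  have hlow := (hδRIP S hScard c).1
  rw [hzero] at hlow
  have hc2 : (0:ℝ) ≤ ∑ j, c j ^ 2 := Finset.sum_nonneg fun j _ => sq_nonneg _
  have hcsum : (∑ j, c j ^ 2) = 0 := by nlinarith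
  have hczero : ∀ j : {j // j ∈ S}, c j = 0 := by
    intro j
    have := (Finset.sum_eq_zero_iff_of_nonneg (fun j _ => sq_nonneg (c j))).mp hcsum j
      (Finset.mem_univ j)
    exact pow_eq_zero_iff (by norm_num) |>.mp this
  apply hne
  funext j
  have hj : h j = 0 := by
    by_cases hjS : j ∈ S
    · exact hczero ⟨j, hjS⟩
    · exact hvanish j hjS
  have : β j - x j = 0 := hj
  linarith
end

section
/- Let x be a vector with support contained in T ∪ Δ, where T and Δ are disjoint, |T| = k, |Δ| = u, and x_j ≠ 0 for all j ∈ Δ. Let y = Ax. Suppose δ_{k+u}(A) < 1 and there exists a vector w satisfying: (1) wᵀA_j = 0 for all j ∈ T; (2) wᵀA_j = sgn(x_j) for all j ∈ Δ; (3) |wᵀA_j| < 1 for all j ∉ T ∪ Δ (A_j denotes the j-th column of A). Then x is the unique minimizer of ‖β_{T^c}‖₁ subject to y = Aβ. -/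
open Matrix BigOperators Finset

lemma mySignAbsLe (a : ℝ) : |Real.sign a| ≤ 1 := by
  rcases lt_trichotomy a 0 with h | h | h
  · rw [Real.sign_of_neg h]; norm_num
  · rw [h, Real.sign_zero]; norm_num
  · rw [Real.sign_of_pos h]; norm_num

lemma mySignMulSelf (a : ℝ) (ha : a ≠ 0) : Real.sign a * a = |a| := by
  rcases lt_trichotomy a 0 with h | h | h
  · rw [Real.sign_of_neg h, abs_of_neg h]; ring
  · exact absurd h ha
  · rw [Real.sign_of_pos h, abs_of_pos h]; ring

/-- the RIP-bound set is nonempty -/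
lemma myRIPNonempty {m n : ℕ} (A : Matrix (Fin m) (Fin n) ℝ) (S : ℕ) :
    {δ : ℝ | 0 ≤ δ ∧ RIPBound A S δ}.Nonempty := by
  set C : ℝ := ∑ i, ∑ j, (A i j) ^ 2 with hC
  have hC0 : 0 ≤ C := Finset.sum_nonneg fun i _ => Finset.sum_nonneg fun j _ => sq_nonneg _
  refine ⟨1 + C, by linarith, ?_⟩
  intro T' hcard c
  have hc0 : 0 ≤ ∑ j, c j ^ 2 := Finset.sum_nonneg fun j _ => sq_nonneg _
  constructor
  · have h1 : (1 - (1 + C)) * (∑ j, c j ^ 2) ≤ 0 := by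
      apply mul_nonpos_of_nonpos_of_nonneg <;> [linarith; exact hc0]
    exact h1.trans (Finset.sum_nonneg fun i _ => sq_nonneg _)
  · have key : ∀ i, ((cols A T').mulVec c i) ^ 2 ≤ (∑ j, (A i j) ^ 2) * (∑ j, c j ^ 2) := by
      intro i
      have h2 : ((cols A T').mulVec c i) ^ 2
          ≤ (∑ j : {j // j ∈ T'}, (A i j.1) ^ 2) * (∑ j, c j ^ 2) := by
        have := Finset.sum_mul_sq_le_sq_mul_sq Finset.univ
          (fun j : {j // j ∈ T'} => A i j.1) c
        simpa [Matrix.mulVec, dotProduct, cols] using this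
      refine h2.trans (mul_le_mul_of_nonneg_right ?_ hc0)
      rw [Finset.sum_coe_sort T' (fun j => (A i j) ^ 2)]
      exact Finset.sum_le_sum_of_subset_of_nonneg (Finset.subset_univ _)
        (fun j _ _ => sq_nonneg _)
    calc (∑ i, ((cols A T').mulVec c i) ^ 2)
        ≤ ∑ i, (∑ j, (A i j) ^ 2) * (∑ j, c j ^ 2) := Finset.sum_le_sum fun i _ => key i
      _ = C * (∑ j, c j ^ 2) := by rw [hC, Finset.sum_mul]
      _ ≤ (1 + (1 + C)) * (∑ j, c j ^ 2) := by nlinarith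

theorem stmt2 {m n k u : ℕ} (A : Matrix (Fin m) (Fin n) ℝ)
    (T Δ : Finset (Fin n)) (x : Fin n → ℝ) (w : Fin m → ℝ)
    (hd : Disjoint T Δ) (hT : T.card = k) (hu : Δ.card = u)
    (hsupp : Function.support x ⊆ ↑(T ∪ Δ))
    (hxΔ : ∀ j ∈ Δ, x j ≠ 0)
    (hrip : ripConst A (k + u) < 1)
    (hw1 : ∀ j ∈ T, (∑ i, w i * A i j) = 0)
    (hw2 : ∀ j ∈ Δ, (∑ i, w i * A i j) = Real.sign (x j))
    (hw3 : ∀ j, j ∉ T → j ∉ Δ → |∑ i, w i * A i j| < 1) :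
    ∀ β : Fin n → ℝ, A.mulVec β = A.mulVec x → β ≠ x →
      (∑ j ∈ Tᶜ, |x j|) < ∑ j ∈ Tᶜ, |β j| := by
  intro β hAβ hβx
  set h : Fin n → ℝ := fun j => β j - x j with hh
  set g : Fin n → ℝ := fun j => ∑ i, w i * A i j with hg
  set S : Finset (Fin n) := T ∪ Δ with hS
  have hAh : ∀ i, ∑ j, A i j * h j = 0 := by
    intro i
    have h1 : ∑ j, A i j * h j = A.mulVec β i - A.mulVec x i := by
      simp [hh, Matrix.mulVec, dotProduct, mul_sub, Finset.sum_sub_distrib]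
    rw [h1, hAβ, sub_self]
  have hx0 : ∀ j, j ∉ S → x j = 0 := by
    intro j hj
    by_contra hne
    exact hj (hsupp hne)
  have hdl : ∀ j ∈ Δ, j ∉ T := fun j hj => (Finset.disjoint_right.mp hd) hj
  -- total sum of g * h is zero
  have hsum0 : ∑ j, g j * h j = 0 := by
    have h1 : ∑ j, g j * h j = ∑ i, w i * (∑ j, A i j * h j) := by
      simp only [hg, Finset.sum_mul, Finset.mul_sum]
      rw [Finset.sum_comm]
      apply Finset.sum_congr rfl; intro j _
      apply Finset.sum_congr rfl; intro i _; ring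
    rw [h1]
    simp [hAh]
  -- partition of Tᶜ
  have hTc : Tᶜ = Δ ∪ Sᶜ := by
    ext j
    simp only [Finset.mem_compl, Finset.mem_union, hS]
    constructor
    · intro hjT
      by_cases hjΔ : j ∈ Δ
      · exact Or.inl hjΔ
      · exact Or.inr (by tauto)
    · rintro (hjΔ | hjS)
      · exact hdl j hjΔ
      · tauto
  have hdisj2 : Disjoint Δ Sᶜ := by
    rw [Finset.disjoint_right]
    intro j hj
    simp only [Finset.mem_compl, hS, Finset.mem_union] at hj
    tauto
  have hsplit : ∀ f : Fin n → ℝ, ∑ j ∈ Tᶜ, f j = ∑ j ∈ Δ, f j + ∑ j ∈ Sᶜ, f j := by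
    intro f; rw [hTc, Finset.sum_union hdisj2]
  -- LHS
  have hLHS : ∑ j ∈ Tᶜ, |x j| = ∑ j ∈ Δ, |x j| := by
    rw [hsplit]
    have : ∑ j ∈ Sᶜ, |x j| = 0 := by
      apply Finset.sum_eq_zero
      intro j hj
      rw [hx0 j (Finset.mem_compl.mp hj), abs_zero]
    linarith
  -- sum over Δ of g*h equals minus sum over Sᶜ
  have hgT : ∑ j ∈ T, g j * h j = 0 :=
    Finset.sum_eq_zero fun j hj => by rw [hg]; simp [hw1 j hj]
  have hΔrest : ∑ j ∈ Δ, g j * h j = - ∑ j ∈ Sᶜ, g j * h j := by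
    have h1 : ∑ j ∈ S, (g j * h j) + ∑ j ∈ Sᶜ, (g j * h j) = ∑ j, g j * h j :=
      Finset.sum_add_sum_compl S _
    rw [hS, Finset.sum_union hd, hgT] at h1
    rw [hsum0] at h1
    linarith
  -- per-term bound on Δ
  have hΔbound : ∀ j ∈ Δ, |x j| + g j * h j ≤ |β j| := by
    intro j hj
    have hgs : g j = Real.sign (x j) := hw2 j hj
    have h1 : |x j| + g j * h j = Real.sign (x j) * β j := by
      rw [hgs, ← mySignMulSelf (x j) (hxΔ j hj), hh]; ring
    rw [h1]
    calc Real.sign (x j) * β j ≤ |Real.sign (x j) * β j| := le_abs_self _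
      _ = |Real.sign (x j)| * |β j| := abs_mul _ _
      _ ≤ 1 * |β j| := mul_le_mul_of_nonneg_right (mySignAbsLe _) (abs_nonneg _)
      _ = |β j| := one_mul _
  -- per-term nonneg on Sᶜ
  have hrest : ∀ j ∈ Sᶜ, 0 ≤ |h j| - g j * h j := by
    intro j hj
    have hj' := Finset.mem_compl.mp hj
    simp only [hS, Finset.mem_union, not_or] at hj'
    have hg1 : |g j| < 1 := hw3 j hj'.1 hj'.2
    have : g j * h j ≤ |h j| :=
      calc g j * h j ≤ |g j * h j| := le_abs_self _
        _ = |g j| * |h j| := abs_mul _ _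
        _ ≤ 1 * |h j| := mul_le_mul_of_nonneg_right hg1.le (abs_nonneg _)
        _ = |h j| := one_mul _
    linarith
  -- key lower bound
  have hmain : ∑ j ∈ Δ, |x j| + ∑ j ∈ Sᶜ, (|h j| - g j * h j) ≤ ∑ j ∈ Tᶜ, |β j| := by
    rw [hsplit (fun j => |β j|)]
    have h1 : ∑ j ∈ Δ, (|x j| + g j * h j) ≤ ∑ j ∈ Δ, |β j| :=
      Finset.sum_le_sum hΔbound
    have h2 : ∑ j ∈ Sᶜ, |β j| = ∑ j ∈ Sᶜ, |h j| := by
      apply Finset.sum_congr rfl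
      intro j hj
      have : β j = h j := by rw [hh]; simp [hx0 j (Finset.mem_compl.mp hj)]
      rw [this]
    rw [h2]
    rw [Finset.sum_add_distrib] at h1
    rw [Finset.sum_sub_distrib]
    have := hΔrest
    linarith
  by_cases hcase : ∃ j ∈ Sᶜ, h j ≠ 0
  · -- strict positivity of the rest sum
    obtain ⟨j0, hj0, hj0ne⟩ := hcase
    have hpos : 0 < ∑ j ∈ Sᶜ, (|h j| - g j * h j) := by
      apply Finset.sum_pos' hrest
      refine ⟨j0, hj0, ?_⟩
      have hj' := Finset.mem_compl.mp hj0
      simp only [hS, Finset.mem_union, not_or] at hj'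
      have hg1 : |g j0| < 1 := hw3 j0 hj'.1 hj'.2
      have habs : 0 < |h j0| := abs_pos.mpr hj0ne
      have : g j0 * h j0 < |h j0| :=
        calc g j0 * h j0 ≤ |g j0| * |h j0| := by
              calc g j0 * h j0 ≤ |g j0 * h j0| := le_abs_self _
                _ = |g j0| * |h j0| := abs_mul _ _
          _ < 1 * |h j0| := by exact mul_lt_mul_of_pos_right hg1 habs
          _ = |h j0| := one_mul _
      linarith
    rw [hLHS]
    linarith
  · -- h vanishes off S; use RIP to get h = 0, contradiction
    exfalso
    push_neg at hcase
    have hzero : ∀ j ∈ S, h j = 0 := by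
      obtain ⟨δ, ⟨hδ0, hδrip⟩, hδ1⟩ :=
        exists_lt_of_csInf_lt (myRIPNonempty A (k + u)) hrip
      have hcard : S.card ≤ k + u := by
        rw [hS, Finset.card_union_of_disjoint hd, hT, hu]
      set c : {j // j ∈ S} → ℝ := fun j => h j.1 with hc
      have hmv : ∀ i, (cols A S).mulVec c i = 0 := by
        intro i
        have h1 : (cols A S).mulVec c i = ∑ j ∈ S, A i j * h j := by
          simp only [Matrix.mulVec, dotProduct, cols, Matrix.of_apply, hc]
          exact Finset.sum_coe_sort S (fun j => A i j * h j)
        have h2 : ∑ j ∈ S, A i j * h j = ∑ j, A i j * h j := by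
          have h3 : ∑ j ∈ Sᶜ, A i j * h j = 0 :=
            Finset.sum_eq_zero fun j hj => by rw [hcase j hj]; ring
          have h4 := Finset.sum_add_sum_compl S (fun j => A i j * h j)
          linarith
        rw [h1, h2, hAh]
      have hlow := (hδrip S hcard c).1
      have hr : ∑ i, ((cols A S).mulVec c i) ^ 2 = 0 :=
        Finset.sum_eq_zero fun i _ => by rw [hmv i]; ring
      rw [hr] at hlow
      have hcnn : ∀ j : {j // j ∈ S}, 0 ≤ c j ^ 2 := fun j => sq_nonneg _
      have hcs : ∑ j, c j ^ 2 = 0 := by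
        have hge : 0 ≤ ∑ j, c j ^ 2 := Finset.sum_nonneg fun j _ => hcnn j
        nlinarith
      have hall := (Finset.sum_eq_zero_iff_of_nonneg (fun j _ => hcnn j)).mp hcs
      intro j hj
      have := hall ⟨j, hj⟩ (Finset.mem_univ _)
      exact pow_eq_zero_iff (by norm_num) |>.mp this
    have hβeq : β = x := by
      funext j
      have hSj : h j = 0 → β j = x j := by
        intro hj; rw [hh] at hj; simp at hj; linarith
      by_cases hjS : j ∈ S
      · exact hSj (hzero j hjS)
      · exact hSj (hcase j (Finset.mem_compl.mpr hjS))
    exact hβx hβeq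
end

section
/- Let A be an m×n matrix, T an index set with |T| = k, and suppose δ_k(A) < 1 so that A_Tᵀ A_T is invertible. Let T_d be disjoint from T with |T_d| ≤ S. Define M = I - A_T(A_Tᵀ A_T)^{-1} A_Tᵀ. If δ_S + δ_k + θ_{k,S}² < 1, then the matrix A_{T_d}ᵀ M A_{T_d} is invertible and ‖(A_{T_d}ᵀ M A_{T_d})^{-1}‖ ≤ 1 / (1 - δ_S - θ_{S,k}²/(1 - δ_k)). -/
open Matrix BigOperators Finset

lemma l2_nonneg {ι : Type*} [Fintype ι] (v : ι → ℝ) : 0 ≤ l2 v := Real.sqrt_nonneg _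

lemma l2_sq {ι : Type*} [Fintype ι] (v : ι → ℝ) : l2 v ^ 2 = ∑ i, v i ^ 2 :=
  Real.sq_sqrt (by positivity)

lemma abs_dot_le_l2 {ι : Type*} [Fintype ι] (v w : ι → ℝ) : |v ⬝ᵥ w| ≤ l2 v * l2 w := by
  have h := Finset.sum_mul_sq_le_sq_mul_sq Finset.univ v w
  calc |v ⬝ᵥ w| = Real.sqrt ((v ⬝ᵥ w) ^ 2) := (Real.sqrt_sq_eq_abs _).symm
    _ ≤ Real.sqrt ((∑ i, v i ^ 2) * ∑ i, w i ^ 2) := Real.sqrt_le_sqrt h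
    _ = l2 v * l2 w := by rw [l2, l2, ← Real.sqrt_mul (by positivity)]

lemma dot_le_l2 {ι : Type*} [Fintype ι] (v w : ι → ℝ) : v ⬝ᵥ w ≤ l2 v * l2 w :=
  (le_abs_self _).trans (abs_dot_le_l2 v w)

lemma mulVec_sq_le {m n : ℕ} (A : Matrix (Fin m) (Fin n) ℝ) (T : Finset (Fin n))
    (c : {j // j ∈ T} → ℝ) :
    ∑ i, ((cols A T).mulVec c i) ^ 2 ≤ (∑ i, ∑ j, A i j ^ 2) * ∑ j, c j ^ 2 := by
  have h1 : ∀ i, ((cols A T).mulVec c i) ^ 2 ≤ (∑ j, (cols A T) i j ^ 2) * ∑ j, c j ^ 2 :=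
    fun i => Finset.sum_mul_sq_le_sq_mul_sq Finset.univ _ _
  have h2 : ∀ i : Fin m, (∑ j, (cols A T) i j ^ 2) ≤ ∑ j, A i j ^ 2 := by
    intro i
    have : (∑ j : {j // j ∈ T}, (cols A T) i j ^ 2) = ∑ j ∈ T, A i j ^ 2 := by
      rw [← Finset.sum_coe_sort T (fun j => A i j ^ 2)]; rfl
    rw [this]
    exact Finset.sum_le_sum_of_subset_of_nonneg (Finset.subset_univ T)
      (fun j _ _ => sq_nonneg _)
  calc ∑ i, ((cols A T).mulVec c i) ^ 2
      ≤ ∑ i, (∑ j, (cols A T) i j ^ 2) * ∑ j, c j ^ 2 := Finset.sum_le_sum fun i _ => h1 i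
    _ ≤ ∑ i, (∑ j, A i j ^ 2) * ∑ j, c j ^ 2 := by
        refine Finset.sum_le_sum fun i _ => mul_le_mul_of_nonneg_right (h2 i) (by positivity)
    _ = (∑ i, ∑ j, A i j ^ 2) * ∑ j, c j ^ 2 := (Finset.sum_mul _ _ _).symm

lemma rip_spec {m n : ℕ} (A : Matrix (Fin m) (Fin n) ℝ) (S : ℕ) :
    0 ≤ ripConst A S ∧ RIPBound A S (ripConst A S) := by
  have hmem : (1 + ∑ i, ∑ j, A i j ^ 2) ∈ {δ : ℝ | 0 ≤ δ ∧ RIPBound A S δ} := by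
    refine ⟨by positivity, fun T hT c => ⟨?_, ?_⟩⟩
    · have h0 : (0:ℝ) ≤ ∑ j, c j ^ 2 := by positivity
      have h1 : (0:ℝ) ≤ ∑ i, ∑ j, A i j ^ 2 := by positivity
      have h2 : (0:ℝ) ≤ ∑ i, ((cols A T).mulVec c i) ^ 2 := by positivity
      nlinarith [mul_nonneg h1 h0]
    · have := mulVec_sq_le A T c
      have h0 : (0:ℝ) ≤ ∑ j, c j ^ 2 := by positivity
      nlinarith
  have hne : Set.Nonempty {δ : ℝ | 0 ≤ δ ∧ RIPBound A S δ} := ⟨_, hmem⟩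
  have hbdd : BddBelow {δ : ℝ | 0 ≤ δ ∧ RIPBound A S δ} := ⟨0, fun x hx => hx.1⟩
  have hcl : IsClosed {δ : ℝ | 0 ≤ δ ∧ RIPBound A S δ} := by
    have heq : {δ : ℝ | 0 ≤ δ ∧ RIPBound A S δ} =
        Set.Ici 0 ∩ ⋂ (T : Finset (Fin n)) (_ : T.card ≤ S) (c : {j // j ∈ T} → ℝ),
          ({δ : ℝ | (1 - δ) * (∑ j, c j ^ 2) ≤ ∑ i, ((cols A T).mulVec c i) ^ 2} ∩
           {δ : ℝ | ∑ i, ((cols A T).mulVec c i) ^ 2 ≤ (1 + δ) * (∑ j, c j ^ 2)}) := by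
      ext δ
      simp only [Set.mem_inter_iff, Set.mem_Ici, Set.mem_iInter, Set.mem_setOf_eq, RIPBound]
    rw [heq]
    refine isClosed_Ici.inter (isClosed_iInter fun T => isClosed_iInter fun _ =>
      isClosed_iInter fun c => IsClosed.inter ?_ ?_)
    · exact isClosed_le (by fun_prop) continuous_const
    · exact isClosed_le continuous_const (by fun_prop)
  have hin := hcl.csInf_mem hne hbdd
  exact ⟨hin.1, hin.2⟩

lemma roc_spec {m n : ℕ} (A : Matrix (Fin m) (Fin n) ℝ) (S₁ S₂ : ℕ) :
    0 ≤ rocConst A S₁ S₂ ∧ ROCBound A S₁ S₂ (rocConst A S₁ S₂) := by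
  have hmem : (∑ i, ∑ j, A i j ^ 2) ∈ {θ : ℝ | 0 ≤ θ ∧ ROCBound A S₁ S₂ θ} := by
    refine ⟨by positivity, fun T₁ T₂ hdisj h1 h2 c₁ c₂ => ?_⟩
    set z₁ := (cols A T₁).mulVec c₁
    set z₂ := (cols A T₂).mulVec c₂
    set F : ℝ := ∑ i, ∑ j, A i j ^ 2 with hF
    have hF0 : 0 ≤ F := by positivity
    have hcs : |∑ i, z₁ i * z₂ i| ≤ l2 z₁ * l2 z₂ := abs_dot_le_l2 z₁ z₂
    have hz₁ : l2 z₁ ≤ Real.sqrt F * l2 c₁ := by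
      rw [l2, l2, ← Real.sqrt_mul hF0]
      exact Real.sqrt_le_sqrt (mulVec_sq_le A T₁ c₁)
    have hz₂ : l2 z₂ ≤ Real.sqrt F * l2 c₂ := by
      rw [l2, l2, ← Real.sqrt_mul hF0]
      exact Real.sqrt_le_sqrt (mulVec_sq_le A T₂ c₂)
    have hsq : Real.sqrt F * Real.sqrt F = F := Real.mul_self_sqrt hF0
    calc |∑ i, z₁ i * z₂ i| ≤ l2 z₁ * l2 z₂ := hcs
      _ ≤ (Real.sqrt F * l2 c₁) * (Real.sqrt F * l2 c₂) :=
          mul_le_mul hz₁ hz₂ (l2_nonneg _) (mul_nonneg (Real.sqrt_nonneg F) (l2_nonneg c₁))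
      _ = (Real.sqrt F * Real.sqrt F) * l2 c₁ * l2 c₂ := by ring
      _ = F * l2 c₁ * l2 c₂ := by rw [hsq]
  have hne : Set.Nonempty {θ : ℝ | 0 ≤ θ ∧ ROCBound A S₁ S₂ θ} := ⟨_, hmem⟩
  have hbdd : BddBelow {θ : ℝ | 0 ≤ θ ∧ ROCBound A S₁ S₂ θ} := ⟨0, fun x hx => hx.1⟩
  have hcl : IsClosed {θ : ℝ | 0 ≤ θ ∧ ROCBound A S₁ S₂ θ} := by
    have heq : {θ : ℝ | 0 ≤ θ ∧ ROCBound A S₁ S₂ θ} =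
        Set.Ici 0 ∩ ⋂ (T₁ : Finset (Fin n)) (T₂ : Finset (Fin n)) (_ : Disjoint T₁ T₂)
          (_ : T₁.card ≤ S₁) (_ : T₂.card ≤ S₂) (c₁ : {j // j ∈ T₁} → ℝ)
          (c₂ : {j // j ∈ T₂} → ℝ),
          {θ : ℝ | |∑ i, (cols A T₁).mulVec c₁ i * (cols A T₂).mulVec c₂ i|
              ≤ θ * l2 c₁ * l2 c₂} := by
      ext θ
      simp only [Set.mem_inter_iff, Set.mem_Ici, Set.mem_iInter, Set.mem_setOf_eq, ROCBound]
    rw [heq]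
    refine isClosed_Ici.inter (isClosed_iInter fun T₁ => isClosed_iInter fun T₂ =>
      isClosed_iInter fun _ => isClosed_iInter fun _ => isClosed_iInter fun _ =>
      isClosed_iInter fun c₁ => isClosed_iInter fun c₂ =>
      isClosed_le continuous_const (by fun_prop))
  have hin := hcl.csInf_mem hne hbdd
  exact ⟨hin.1, hin.2⟩

lemma rocConst_symm {m n : ℕ} (A : Matrix (Fin m) (Fin n) ℝ) (S₁ S₂ : ℕ) :
    rocConst A S₁ S₂ = rocConst A S₂ S₁ := by
  have key : ∀ S₁ S₂ θ, ROCBound A S₁ S₂ θ → ROCBound A S₂ S₁ θ := by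
    intro S₁ S₂ θ h T₁ T₂ hdisj h1 h2 c₁ c₂
    calc |∑ i, (cols A T₁).mulVec c₁ i * (cols A T₂).mulVec c₂ i|
        = |∑ i, (cols A T₂).mulVec c₂ i * (cols A T₁).mulVec c₁ i| := by
          congr 1; exact Finset.sum_congr rfl fun i _ => mul_comm _ _
      _ ≤ θ * l2 c₂ * l2 c₁ := h T₂ T₁ hdisj.symm h2 h1 c₂ c₁
      _ = θ * l2 c₁ * l2 c₂ := by ring
  unfold rocConst
  congr 1
  ext θ
  exact ⟨fun h => ⟨h.1, key _ _ _ h.2⟩, fun h => ⟨h.1, key _ _ _ h.2⟩⟩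

lemma coercive {ι : Type*} [Fintype ι] [DecidableEq ι] (B : Matrix ι ι ℝ) (α : ℝ) (hα : 0 < α)
    (h : ∀ c : ι → ℝ, α * ∑ i, c i ^ 2 ≤ c ⬝ᵥ B.mulVec c) :
    IsUnit B ∧ (∀ v, l2 (B⁻¹.mulVec v) ≤ (1 / α) * l2 v) ∧
      ∀ v, v ⬝ᵥ B⁻¹.mulVec v ≤ (1 / α) * ∑ i, v i ^ 2 := by
  have hker : ∀ v : ι → ℝ, B.mulVec v = 0 → v = 0 := by
    intro v hv
    have h1 := h v
    rw [hv, dotProduct_zero] at h1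
    have hz : ∑ i, v i ^ 2 = 0 := le_antisymm (by nlinarith [h1]) (by positivity)
    funext i
    have := (Finset.sum_eq_zero_iff_of_nonneg (fun i _ => sq_nonneg (v i))).1 hz i
      (Finset.mem_univ i)
    exact pow_eq_zero_iff (two_ne_zero) |>.1 this
  have hinj : Function.Injective B.mulVec := by
    intro x y hxy
    have : B.mulVec (x - y) = 0 := by rw [Matrix.mulVec_sub, hxy, sub_self]
    have := hker _ this
    exact sub_eq_zero.1 this
  have hunit : IsUnit B := Matrix.mulVec_injective_iff_isUnit.1 hinj
  have hBB : B * B⁻¹ = 1 := Matrix.mul_nonsing_inv B ((Matrix.isUnit_iff_isUnit_det B).1 hunit)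
  have hsolve : ∀ v, B.mulVec (B⁻¹.mulVec v) = v := by
    intro v
    rw [Matrix.mulVec_mulVec, hBB, Matrix.one_mulVec]
  have hnorm : ∀ v, l2 (B⁻¹.mulVec v) ≤ (1 / α) * l2 v := by
    intro v
    set w := B⁻¹.mulVec v with hw
    have h1 : α * ∑ i, w i ^ 2 ≤ w ⬝ᵥ v := by
      have := h w; rwa [hsolve v] at this
    have h2 : w ⬝ᵥ v ≤ l2 w * l2 v := dot_le_l2 w v
    have h3 : α * l2 w ^ 2 ≤ l2 w * l2 v := by rw [l2_sq]; linarith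
    rw [one_div, ← div_eq_inv_mul, le_div_iff₀ hα]
    rcases (l2_nonneg w).lt_or_eq with hlw | hlw
    · nlinarith [hlw]
    · rw [← hlw]; simpa using l2_nonneg v
  refine ⟨hunit, hnorm, fun v => ?_⟩
  calc v ⬝ᵥ B⁻¹.mulVec v ≤ l2 v * l2 (B⁻¹.mulVec v) := dot_le_l2 _ _
    _ ≤ l2 v * ((1 / α) * l2 v) :=
        mul_le_mul_of_nonneg_left (hnorm v) (l2_nonneg _)
    _ = (1 / α) * l2 v ^ 2 := by ring
    _ = (1 / α) * ∑ i, v i ^ 2 := by rw [l2_sq]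

lemma dot_self_eq {ι : Type*} [Fintype ι] (v : ι → ℝ) : v ⬝ᵥ v = ∑ i, v i ^ 2 := by
  simp [dotProduct, sq]

theorem stmt5 {m n k S : ℕ} (A : Matrix (Fin m) (Fin n) ℝ)
    (T Td : Finset (Fin n)) (hT : T.card = k) (hTd : Td.card ≤ S)
    (hd : Disjoint T Td) (hδk : ripConst A k < 1)
    (hcond : ripConst A S + ripConst A k + rocConst A k S ^ 2 < 1) :
    IsUnit ((cols A Td)ᵀ * projM A T * cols A Td) ∧
    ∀ v : {j // j ∈ Td} → ℝ,
      l2 ((((cols A Td)ᵀ * projM A T * cols A Td)⁻¹).mulVec v) ≤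
        (1 / (1 - ripConst A S - rocConst A S k ^ 2 / (1 - ripConst A k))) * l2 v := by
  obtain ⟨hδS0, hripS⟩ := rip_spec A S
  obtain ⟨hδk0, hripk⟩ := rip_spec A k
  obtain ⟨hθ0, hroc⟩ := roc_spec A k S
  rw [rocConst_symm A k S] at hcond hθ0 hroc
  set δS := ripConst A S with hδSdef
  set δk := ripConst A k with hδkdef
  set θ := rocConst A S k with hθdef
  have h1k : 0 < 1 - δk := by linarith
  have hα : 0 < 1 - δS - θ ^ 2 / (1 - δk) := by
    have hlt : θ ^ 2 / (1 - δk) < 1 - δS := by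
      rw [div_lt_iff₀ h1k]
      nlinarith [mul_nonneg hδS0 hδk0]
    linarith
  set G := (cols A T)ᵀ * cols A T with hGdef
  have hGq : ∀ x : {j // j ∈ T} → ℝ, (1 - δk) * ∑ i, x i ^ 2 ≤ x ⬝ᵥ G.mulVec x := by
    intro x
    have he : x ⬝ᵥ G.mulVec x = ∑ i, ((cols A T).mulVec x i) ^ 2 := by
      rw [hGdef, ← Matrix.mulVec_mulVec, Matrix.dotProduct_mulVec, Matrix.vecMul_transpose,
        dot_self_eq]
    rw [he]
    exact (hripk T hT.le x).1
  obtain ⟨hGunit, -, hGquad⟩ := coercive G (1 - δk) h1k hGq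
  have hBq : ∀ c : {j // j ∈ Td} → ℝ,
      (1 - δS - θ ^ 2 / (1 - δk)) * ∑ i, c i ^ 2 ≤
        c ⬝ᵥ ((cols A Td)ᵀ * projM A T * cols A Td).mulVec c := by
    intro c
    set z := (cols A Td).mulVec c with hz
    set u := (cols A T)ᵀ.mulVec z with hu
    have keyTd : ∀ w : Fin m → ℝ, c ⬝ᵥ ((cols A Td)ᵀ.mulVec w) = z ⬝ᵥ w := fun w => by
      rw [Matrix.dotProduct_mulVec, Matrix.vecMul_transpose, hz]
    have keyT : ∀ w : {j // j ∈ T} → ℝ, z ⬝ᵥ ((cols A T).mulVec w) = u ⬝ᵥ w := fun w => by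
      rw [Matrix.dotProduct_mulVec, hu, Matrix.mulVec_transpose]
    have hid : c ⬝ᵥ ((cols A Td)ᵀ * projM A T * cols A Td).mulVec c
        = ∑ i, z i ^ 2 - u ⬝ᵥ (G⁻¹.mulVec u) := by
      rw [← Matrix.mulVec_mulVec, ← hz, ← Matrix.mulVec_mulVec, keyTd]
      simp only [projM]
      rw [← hGdef, Matrix.sub_mulVec, Matrix.one_mulVec, dotProduct_sub, dot_self_eq,
        ← Matrix.mulVec_mulVec, ← Matrix.mulVec_mulVec, ← hu, keyT]
    have hlow : (1 - δS) * ∑ i, c i ^ 2 ≤ ∑ i, z i ^ 2 := (hripS Td hTd c).1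
    have huu : ∑ i, u i ^ 2 ≤ θ ^ 2 * ∑ i, c i ^ 2 := by
      have h2 := hroc T Td hd hT.le hTd u c
      have h3 : (∑ i, ((cols A T).mulVec u) i * ((cols A Td).mulVec c) i) = u ⬝ᵥ u := by
        have h4 : (∑ i, ((cols A T).mulVec u) i * ((cols A Td).mulVec c) i)
            = z ⬝ᵥ ((cols A T).mulVec u) := by
          rw [hz]
          simp [dotProduct, mul_comm]
        rw [h4, keyT]
      rw [h3, dot_self_eq] at h2
      have h5 : l2 u ^ 2 ≤ θ * l2 u * l2 c := by
        rw [l2_sq]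
        calc ∑ i, u i ^ 2 ≤ |∑ i, u i ^ 2| := le_abs_self _
          _ ≤ θ * l2 u * l2 c := h2
      have h6 : l2 u ^ 2 ≤ θ ^ 2 * l2 c ^ 2 := by
        nlinarith [sq_nonneg (l2 u - θ * l2 c), l2_nonneg u, l2_nonneg c]
      calc ∑ i, u i ^ 2 = l2 u ^ 2 := (l2_sq u).symm
        _ ≤ θ ^ 2 * l2 c ^ 2 := h6
        _ = θ ^ 2 * ∑ i, c i ^ 2 := by rw [l2_sq]
    have hquad : u ⬝ᵥ (G⁻¹.mulVec u) ≤ (1 / (1 - δk)) * (θ ^ 2 * ∑ i, c i ^ 2) := by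
      calc u ⬝ᵥ (G⁻¹.mulVec u) ≤ (1 / (1 - δk)) * ∑ i, u i ^ 2 := hGquad u
        _ ≤ (1 / (1 - δk)) * (θ ^ 2 * ∑ i, c i ^ 2) :=
            mul_le_mul_of_nonneg_left huu (by positivity)
    have hrw : (1 / (1 - δk)) * (θ ^ 2 * ∑ i, c i ^ 2)
        = (θ ^ 2 / (1 - δk)) * ∑ i, c i ^ 2 := by ring
    rw [hid]
    rw [hrw] at hquad
    linarith
  obtain ⟨hBunit, hBnorm, -⟩ := coercive _ _ hα hBq
  exact ⟨hBunit, hBnorm⟩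
end

section
/- Let x be a sparse vector with support N = T ∪ Δ \ Δₑ where Δ is disjoint from T and Δₑ ⊆ T, with |T| = k, |Δ| = u. Let y = Ax. Define a_k(S,Š) := (θ_{Š,S} + θ_{Š,k}θ_{S,k}/(1-δ_k)) / (1 - δ_S - θ_{S,k}²/(1-δ_k)). If (1) δ_{k+u} < 1 and δ_{2u} + δ_k + θ_{k,2u}² < 1, and (2) a_k(2u,u) + a_k(u,u) < 1, then x is the unique minimizer of ‖β_{T^c}‖₁ subject to y = Aβ. -/
open Matrix BigOperators Finset

/-
Put `z = β - x`, so `A z = 0`. If `β` did no better than `x` off `T`, then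
`‖z_{Tᶜ∖Δ}‖₁ ≤ ‖z_Δ‖₁`. Cut `Tᶜ∖Δ` into blocks of `u` entries of decreasing modulus: every block
has `ℓ₂` norm at most the `ℓ₁` norm of the previous one over `√u`, so by restricted orthogonality
everything after the first block `B` pairs with an `S`-sparse vector `w` through at most
`θ_{u,S} ‖z_{Tᶜ∖Δ}‖₁ / √u ‖w‖₂`, and `‖z_{Tᶜ∖Δ}‖₁ / √u ≤ ‖z_Δ‖₁ / √u ≤ ‖z_{Δ∪B}‖₂`.
Pairing `A z = 0` with `A z_{Δ∪B}` and with `A z_T` gives two coupled quadratic bounds on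
`s = ‖z_{Δ∪B}‖₂` and `t = ‖z_T‖₂`; eliminating `t`, they force `s = 0` precisely because
`a_k(2u,u) < 1`. The cone inequality then kills `z` off `T`, and `δ_k < 1` kills it on `T`.
-/

lemma Finset.exists_subset_card_eq_forall_sdiff_le {α β : Type*} [DecidableEq α]
    [AddCommMonoid β] [LinearOrder β] [IsOrderedCancelAddMonoid β]
    (E : Finset α) (f : α → β) {u : ℕ} (hu : u ≤ #E) :
    ∃ B ⊆ E, #B = u ∧ ∀ i ∈ E \ B, ∀ j ∈ B, f i ≤ f j := by
  obtain ⟨B, hB, hmax⟩ := (E.powersetCard u).exists_max_image (fun B => ∑ j ∈ B, f j)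
    (powersetCard_nonempty.2 hu)
  obtain ⟨hBE, hBu⟩ := mem_powersetCard.1 hB
  refine ⟨B, hBE, hBu, fun i hi j hj => le_of_not_gt fun hji => ?_⟩
  obtain ⟨hiE, hiB⟩ := mem_sdiff.1 hi
  have hiB' : i ∉ B.erase j := fun h => hiB (mem_of_mem_erase h)
  have hswap : insert i (B.erase j) ∈ E.powersetCard u := by
    refine mem_powersetCard.2 ⟨insert_subset hiE ((erase_subset j B).trans hBE), ?_⟩
    rw [card_insert_of_notMem hiB', card_erase_of_mem hj, hBu,
      Nat.sub_add_cancel (hBu ▸ card_pos.2 ⟨j, hj⟩)]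
  have := hmax _ hswap
  rw [sum_insert hiB', ← add_sum_erase B f hj] at this
  exact (add_lt_add_of_lt_of_le hji le_rfl).not_ge this

lemma sum_abs_div_sqrt_le_sqrt_sum_sq {α : Type*} {D : Finset α} {u : ℕ} (hD : #D ≤ u)
    (h : α → ℝ) : (∑ j ∈ D, |h j|) / √u ≤ √(∑ j ∈ D, h j ^ 2) := calc
  _ ≤ √(#D : ℝ) * √(∑ j ∈ D, h j ^ 2) / √u := by
    gcongr
    simpa using Real.sum_mul_le_sqrt_mul_sqrt D (fun _ => 1) (fun j => |h j|)
  _ = √(#D : ℝ) / √u * √(∑ j ∈ D, h j ^ 2) := mul_div_right_comm ..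
  _ ≤ √(∑ j ∈ D, h j ^ 2) := mul_le_of_le_one_left (Real.sqrt_nonneg _) <|
    div_le_one_of_le₀ (Real.sqrt_le_sqrt (by exact_mod_cast hD)) (Real.sqrt_nonneg _)

lemma indicator_add_indicator_union_add_indicator_sdiff {α M : Type*} [Fintype α] [DecidableEq α]
    [AddMonoid M] {T D B : Finset α} (hTD : Disjoint T D) (hB : B ⊆ Tᶜ \ D) (z : α → M) :
    Set.indicator T z + Set.indicator ↑(D ∪ B) z + Set.indicator ↑((Tᶜ \ D) \ B) z = z := by
  funext j
  have hjB := @hB j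
  have hjT := fun h : j ∈ T => disjoint_left.1 hTD h
  simp only [Pi.add_apply, Set.indicator_apply, mem_coe, mem_union, mem_sdiff, mem_compl] at hjB ⊢
  split_ifs <;> grind

lemma abs_sum_mul_le_sqrt_mul_sqrt {α : Type*} (s : Finset α) (f g : α → ℝ) :
    |∑ i ∈ s, f i * g i| ≤ √(∑ i ∈ s, f i ^ 2) * √(∑ i ∈ s, g i ^ 2) := by
  refine (abs_sum_le_sum_abs _ _).trans ?_
  simpa [abs_mul] using Real.sum_mul_le_sqrt_mul_sqrt s (fun i => |f i|) (fun i => |g i|)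

lemma sqrt_sum_sq_le_sum_abs_div_sqrt_card {α : Type*} {B B' : Finset α} {h : α → ℝ}
    (hcard : #B' ≤ #B) (hdom : ∀ i ∈ B', ∀ j ∈ B, |h i| ≤ |h j|) :
    √(∑ i ∈ B', h i ^ 2) ≤ (∑ j ∈ B, |h j|) / √(#B : ℝ) := by
  rcases B.eq_empty_or_nonempty with rfl | hB
  · simp [card_eq_zero.1 (Nat.le_zero.1 hcard)]
  set a := ∑ j ∈ B, |h j|
  have hB0 : (0 : ℝ) < #B := by exact_mod_cast hB.card_pos
  have hmean : ∀ i ∈ B', |h i| ≤ a / #B := fun i hi => by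
    rw [le_div_iff₀ hB0, mul_comm, ← nsmul_eq_mul, ← sum_const]
    exact sum_le_sum (hdom i hi)
  have hsq : ∑ i ∈ B', h i ^ 2 ≤ a ^ 2 / #B := calc
    ∑ i ∈ B', h i ^ 2 ≤ ∑ _i ∈ B', (a / #B) ^ 2 := sum_le_sum fun i hi => by
      rw [← sq_abs]; exact pow_le_pow_left₀ (abs_nonneg _) (hmean i hi) 2
    _ = #B' * (a / #B) ^ 2 := by rw [sum_const, nsmul_eq_mul]
    _ ≤ #B * (a / #B) ^ 2 := by gcongr
    _ = a ^ 2 / #B := by field_simp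
  calc √(∑ i ∈ B', h i ^ 2) ≤ √(a ^ 2 / #B) := Real.sqrt_le_sqrt hsq
    _ = a / √(#B : ℝ) := by
      rw [Real.sqrt_div' _ hB0.le, Real.sqrt_sq (sum_nonneg fun _ _ => abs_nonneg _)]

lemma dotProduct_self_le_abs_add_abs {ι R : Type*} [Fintype ι] [CommRing R] [LinearOrder R]
    [IsStrictOrderedRing R] {p q r : ι → R} (h : p + q + r = 0) :
    p ⬝ᵥ p ≤ |p ⬝ᵥ q| + |p ⬝ᵥ r| := by
  have : p ⬝ᵥ p + p ⬝ᵥ q + p ⬝ᵥ r = 0 := by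
    rw [← dotProduct_add, ← dotProduct_add, h, dotProduct_zero]
  linarith [neg_abs_le (p ⬝ᵥ q), neg_abs_le (p ⬝ᵥ r)]

section RestrictedConstants

variable {m n : ℕ} (A : Matrix (Fin m) (Fin n) ℝ)

lemma sum_cols_mulVec_sq_le (T : Finset (Fin n)) (c : {j // j ∈ T} → ℝ) :
    ∑ i, (cols A T *ᵥ c) i ^ 2 ≤ (∑ i, ∑ j, A i j ^ 2) * ∑ j, c j ^ 2 := by
  rw [sum_mul]
  refine sum_le_sum fun i _ => ?_
  calc (cols A T *ᵥ c) i ^ 2 ≤ (∑ j : {j // j ∈ T}, A i j ^ 2) * ∑ j, c j ^ 2 := by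
        simpa [mulVec, dotProduct, cols] using sum_mul_sq_le_sq_mul_sq univ (fun j => A i j.1) c
    _ ≤ (∑ j, A i j ^ 2) * ∑ j, c j ^ 2 := by
        gcongr
        rw [sum_coe_sort T (fun j => A i j ^ 2)]
        exact sum_le_sum_of_subset_of_nonneg (subset_univ T) fun _ _ _ => sq_nonneg _

lemma ripBound_nonempty (S : ℕ) : {δ : ℝ | 0 ≤ δ ∧ RIPBound A S δ}.Nonempty := by
  refine ⟨1 + ∑ i, ∑ j, A i j ^ 2, by positivity, fun T _ c => ⟨?_, ?_⟩⟩
  · nlinarith [sum_nonneg fun j (_ : j ∈ univ) => sq_nonneg (c j),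
      sum_nonneg fun i (_ : i ∈ univ) => sq_nonneg ((cols A T *ᵥ c) i),
      mul_nonneg (sum_nonneg fun i (_ : i ∈ univ) => sum_nonneg fun j (_ : j ∈ univ) =>
        sq_nonneg (A i j)) (sum_nonneg fun j (_ : j ∈ univ) => sq_nonneg (c j))]
  · nlinarith [sum_cols_mulVec_sq_le A T c, sum_nonneg fun j (_ : j ∈ univ) => sq_nonneg (c j)]

lemma rocBound_nonempty (S₁ S₂ : ℕ) : {θ : ℝ | 0 ≤ θ ∧ ROCBound A S₁ S₂ θ}.Nonempty := by
  refine ⟨∑ i, ∑ j, A i j ^ 2, by positivity, fun T₁ T₂ _ _ _ c₁ c₂ => ?_⟩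
  set K := ∑ i, ∑ j, A i j ^ 2
  have hK : 0 ≤ K := by positivity
  calc |∑ i, (cols A T₁ *ᵥ c₁) i * (cols A T₂ *ᵥ c₂) i|
      ≤ √(∑ i, (cols A T₁ *ᵥ c₁) i ^ 2) * √(∑ i, (cols A T₂ *ᵥ c₂) i ^ 2) :=
        abs_sum_mul_le_sqrt_mul_sqrt _ _ _
    _ ≤ √(K * ∑ j, c₁ j ^ 2) * √(K * ∑ j, c₂ j ^ 2) := by
        gcongr <;> exact sum_cols_mulVec_sq_le A _ _
    _ = K * l2 c₁ * l2 c₂ := by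
        rw [l2, l2, Real.sqrt_mul hK, Real.sqrt_mul hK]
        linear_combination √(∑ j, c₁ j ^ 2) * √(∑ j, c₂ j ^ 2) * Real.mul_self_sqrt hK

lemma isClosed_ripBound (S : ℕ) : IsClosed {δ : ℝ | 0 ≤ δ ∧ RIPBound A S δ} := by
  simp only [RIPBound, Set.ofPred_and, Set.ofPred_forall]
  exact (isClosed_le continuous_const continuous_id).inter <|
    isClosed_iInter fun _ => isClosed_iInter fun _ => isClosed_iInter fun _ =>
      (isClosed_le (by fun_prop) continuous_const).inter
        (isClosed_le continuous_const (by fun_prop))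

lemma isClosed_rocBound (S₁ S₂ : ℕ) : IsClosed {θ : ℝ | 0 ≤ θ ∧ ROCBound A S₁ S₂ θ} := by
  simp only [ROCBound, Set.ofPred_and, Set.ofPred_forall]
  exact (isClosed_le continuous_const continuous_id).inter <|
    isClosed_iInter fun _ => isClosed_iInter fun _ => isClosed_iInter fun _ =>
      isClosed_iInter fun _ => isClosed_iInter fun _ => isClosed_iInter fun _ =>
        isClosed_iInter fun _ => isClosed_le continuous_const (by fun_prop)

lemma ripConst_mem (S : ℕ) : ripConst A S ∈ {δ : ℝ | 0 ≤ δ ∧ RIPBound A S δ} :=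
  (isClosed_ripBound A S).csInf_mem (ripBound_nonempty A S) ⟨0, fun _ h => h.1⟩

lemma rocConst_mem (S₁ S₂ : ℕ) : rocConst A S₁ S₂ ∈ {θ : ℝ | 0 ≤ θ ∧ ROCBound A S₁ S₂ θ} :=
  (isClosed_rocBound A S₁ S₂).csInf_mem (rocBound_nonempty A S₁ S₂) ⟨0, fun _ h => h.1⟩

lemma ripConst_nonneg (S : ℕ) : 0 ≤ ripConst A S := (ripConst_mem A S).1

lemma rocConst_nonneg (S₁ S₂ : ℕ) : 0 ≤ rocConst A S₁ S₂ := (rocConst_mem A S₁ S₂).1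

lemma ripConst_mono {S S' : ℕ} (h : S ≤ S') : ripConst A S ≤ ripConst A S' :=
  csInf_le_csInf ⟨0, fun _ hδ => hδ.1⟩ (ripBound_nonempty A S') fun _ hδ =>
    ⟨hδ.1, fun T hT => hδ.2 T (hT.trans h)⟩

lemma rocConst_mono_left {S₁ S₁' S₂ : ℕ} (h : S₁ ≤ S₁') : rocConst A S₁ S₂ ≤ rocConst A S₁' S₂ :=
  csInf_le_csInf ⟨0, fun _ hθ => hθ.1⟩ (rocBound_nonempty A S₁' S₂) fun _ hθ =>
    ⟨hθ.1, fun T₁ T₂ hd h₁ => hθ.2 T₁ T₂ hd (h₁.trans h)⟩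

lemma ROCBound.symm {S₁ S₂ : ℕ} {θ : ℝ} (h : ROCBound A S₁ S₂ θ) : ROCBound A S₂ S₁ θ := by
  intro T₁ T₂ hd h₁ h₂ c₁ c₂
  rw [mul_right_comm]
  simpa only [mul_comm ((cols A T₂ *ᵥ c₂) _)] using h T₂ T₁ hd.symm h₂ h₁ c₂ c₁

lemma rocConst_comm (S₁ S₂ : ℕ) : rocConst A S₁ S₂ = rocConst A S₂ S₁ := by
  unfold rocConst
  congr 1
  ext θ
  exact ⟨fun h => ⟨h.1, h.2.symm⟩, fun h => ⟨h.1, h.2.symm⟩⟩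

end RestrictedConstants

section Indicator

variable {m n : ℕ} (A : Matrix (Fin m) (Fin n) ℝ)

lemma cols_mulVec_restrict (S : Finset (Fin n)) (v : Fin n → ℝ) :
    cols A S *ᵥ (fun j => v j) = A *ᵥ Set.indicator S v := by
  funext i
  simp only [mulVec, dotProduct, cols, of_apply, Set.indicator_apply, mem_coe, mul_ite, mul_zero,
    sum_ite_mem, univ_inter]
  exact sum_coe_sort S (fun j => A i j * v j)

lemma one_sub_ripConst_mul_le {N : ℕ} {S : Finset (Fin n)} (hS : #S ≤ N) (v : Fin n → ℝ) :
    (1 - ripConst A N) * ∑ j ∈ S, v j ^ 2 ≤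
      A *ᵥ Set.indicator S v ⬝ᵥ A *ᵥ Set.indicator S v := by
  have h := ((ripConst_mem A N).2 S hS fun j => v j).1
  rw [cols_mulVec_restrict, sum_coe_sort S (fun j => v j ^ 2)] at h
  simpa only [dotProduct, sq] using h

lemma abs_dotProduct_le_rocConst {N₁ N₂ : ℕ} {S₁ S₂ : Finset (Fin n)} (hd : Disjoint S₁ S₂)
    (h₁ : #S₁ ≤ N₁) (h₂ : #S₂ ≤ N₂) (v w : Fin n → ℝ) :
    |A *ᵥ Set.indicator S₁ v ⬝ᵥ A *ᵥ Set.indicator S₂ w| ≤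
      rocConst A N₁ N₂ * √(∑ j ∈ S₁, v j ^ 2) * √(∑ j ∈ S₂, w j ^ 2) := by
  have h := (rocConst_mem A N₁ N₂).2 S₁ S₂ hd h₁ h₂ (fun j => v j) (fun j => w j)
  rwa [cols_mulVec_restrict, cols_mulVec_restrict, l2, l2, sum_coe_sort S₁ (fun j => v j ^ 2),
    sum_coe_sort S₂ (fun j => w j ^ 2)] at h

lemma exists_abs_dotProduct_indicator_sdiff_le {u : ℕ} (hu : 0 < u) (h : Fin n → ℝ)
    (E : Finset (Fin n)) :
    ∃ B ⊆ E, #B ≤ u ∧ ∀ (M : ℕ) (S : Finset (Fin n)) (v : Fin n → ℝ),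
      Disjoint S (E \ B) → #S ≤ M →
      |A *ᵥ Set.indicator ↑(E \ B) h ⬝ᵥ A *ᵥ Set.indicator S v| ≤
        rocConst A u M * ((∑ j ∈ E, |h j|) / √u) * √(∑ j ∈ S, v j ^ 2) := by
  induction E using Finset.strongInduction with
  | H E ih =>
  by_cases hE : #E ≤ u
  · refine ⟨E, subset_rfl, hE, fun M S v _ _ => ?_⟩
    simp only [Finset.sdiff_self, coe_empty, Set.indicator_empty', mulVec_zero, zero_dotProduct,
      abs_zero]
    have := rocConst_nonneg A u M
    positivity
  obtain ⟨B, hBE, hB, hdom⟩ :=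
    exists_subset_card_eq_forall_sdiff_le E (fun j => |h j|) (le_of_not_ge hE)
  obtain ⟨B', hB'E, hB', hbound⟩ := ih _ (sdiff_ssubset hBE (card_pos.1 (hB ▸ hu)))
  refine ⟨B, hBE, hB.le, fun M S v hS hSM => ?_⟩
  have hsplit : Set.indicator ↑(E \ B) h =
      Set.indicator ↑B' h + Set.indicator ↑((E \ B) \ B') h := by
    conv_lhs => rw [← union_sdiff_of_subset hB'E, coe_union]
    exact Set.indicator_union_of_disjoint (disjoint_coe.2 disjoint_sdiff) h
  have hhead : √(∑ j ∈ B', h j ^ 2) ≤ (∑ j ∈ B, |h j|) / √u := hB ▸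
    sqrt_sum_sq_le_sum_abs_div_sqrt_card (hB'.trans hB.ge) fun i hi => hdom i (hB'E hi)
  have h₁ := abs_dotProduct_le_rocConst A (disjoint_of_subset_right hB'E hS).symm hB' hSM h v
  have h₂ := hbound M S v (disjoint_of_subset_right sdiff_subset hS) hSM
  have := rocConst_nonneg A u M
  rw [hsplit, mulVec_add, add_dotProduct, ← sum_sdiff hBE, add_comm (∑ x ∈ E \ B, |h x|),
    add_div, mul_add, add_mul]
  calc _ ≤ _ := abs_add_le _ _
    _ ≤ _ := add_le_add (h₁.trans (by gcongr)) h₂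

lemma eq_zero_of_coupled_bounds {δ δₖ θ₀ θ₁ θ₂ s t e : ℝ} (hδₖ : δₖ < 1)
    (hden : 0 < 1 - δ - θ₂ ^ 2 / (1 - δₖ))
    (ha : (θ₀ + θ₁ * θ₂ / (1 - δₖ)) / (1 - δ - θ₂ ^ 2 / (1 - δₖ)) < 1)
    (hθ₀ : 0 ≤ θ₀) (hθ₁ : 0 ≤ θ₁) (hθ₂ : 0 ≤ θ₂) (hs : 0 ≤ s) (ht : 0 ≤ t) (hes : e ≤ s)
    (hS : (1 - δ) * s ^ 2 ≤ θ₂ * s * t + θ₀ * e * s)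
    (hT : (1 - δₖ) * t ^ 2 ≤ θ₂ * s * t + θ₁ * e * t) : s = 0 := by
  have hk : 0 < 1 - δₖ := sub_pos.2 hδₖ
  have hkey : θ₀ * (1 - δₖ) + θ₁ * θ₂ < (1 - δ) * (1 - δₖ) - θ₂ ^ 2 := by
    have e₁ : θ₁ * θ₂ / (1 - δₖ) * (1 - δₖ) = θ₁ * θ₂ := div_mul_cancel₀ _ hk.ne'
    have e₂ : θ₂ ^ 2 / (1 - δₖ) * (1 - δₖ) = θ₂ ^ 2 := div_mul_cancel₀ _ hk.ne'
    linarith [mul_lt_mul_of_pos_right ((div_lt_one hden).1 ha) hk]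
  by_contra hs0
  have hspos : 0 < s := lt_of_le_of_ne hs (Ne.symm hs0)
  have hs' : (1 - δ) * s ≤ θ₂ * t + θ₀ * s := by
    refine le_of_mul_le_mul_right ?_ hspos
    nlinarith [mul_le_mul_of_nonneg_left hes (mul_nonneg hθ₀ hs)]
  have ht' : (1 - δₖ) * t ≤ (θ₂ + θ₁) * s := by
    rcases ht.eq_or_lt with rfl | htpos
    · simp only [mul_zero]; positivity
    refine le_of_mul_le_mul_right ?_ htpos
    nlinarith [mul_le_mul_of_nonneg_left hes (mul_nonneg hθ₁ ht)]
  nlinarith [mul_le_mul_of_nonneg_left ht' hθ₂, mul_le_mul_of_nonneg_right hs' hk.le]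

lemma sum_abs_sub_le_of_sum_abs_le {α : Type*} [Fintype α] [DecidableEq α] {T D : Finset α}
    {x β : α → ℝ} (hTD : Disjoint T D) (hx : ∀ j ∈ Tᶜ \ D, x j = 0)
    (hle : ∑ j ∈ Tᶜ, |β j| ≤ ∑ j ∈ Tᶜ, |x j|) :
    ∑ j ∈ Tᶜ \ D, |β j - x j| ≤ ∑ j ∈ D, |β j - x j| := by
  have hD : D ⊆ Tᶜ := fun j hj => mem_compl.2 (disjoint_right.1 hTD hj)
  have hxE : ∑ j ∈ Tᶜ \ D, |x j| = 0 := sum_eq_zero fun j hj => by rw [hx j hj, abs_zero]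
  have hxD : ∑ j ∈ D, |x j| ≤ ∑ j ∈ D, |β j| + ∑ j ∈ D, |β j - x j| := by
    rw [← sum_add_distrib]
    exact sum_le_sum fun j _ => by
      linarith [abs_sub_abs_le_abs_sub (x j) (β j), abs_sub_comm (x j) (β j)]
  rw [← sum_sdiff hD, ← sum_sdiff hD, hxE] at hle
  rw [sum_congr rfl fun j hj => by rw [hx j hj, sub_zero]]
  linarith

section Constants

variable {m n : ℕ} (A : Matrix (Fin m) (Fin n) ℝ) {k S : ℕ}

lemma aConst_denom_pos (h : ripConst A S + ripConst A k + rocConst A S k ^ 2 < 1) :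
    0 < 1 - ripConst A S - rocConst A S k ^ 2 / (1 - ripConst A k) := by
  have hk : 0 < 1 - ripConst A k := by
    nlinarith [ripConst_nonneg A S, sq_nonneg (rocConst A S k)]
  rw [sub_pos, div_lt_iff₀ hk]
  nlinarith [mul_nonneg (ripConst_nonneg A S) (ripConst_nonneg A k)]

lemma aConst_nonneg (h : ripConst A S + ripConst A k + rocConst A S k ^ 2 < 1) (S' : ℕ) :
    0 ≤ aConst A k S S' := by
  have hk : 0 ≤ 1 - ripConst A k := by
    nlinarith [ripConst_nonneg A S, sq_nonneg (rocConst A S k)]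
  exact div_nonneg (add_nonneg (rocConst_nonneg A S' S) (div_nonneg
    (mul_nonneg (rocConst_nonneg A S' k) (rocConst_nonneg A S k)) hk)) (aConst_denom_pos A h).le

end Constants

section NullSpace

variable {m n : ℕ} (A : Matrix (Fin m) (Fin n) ℝ) {k u : ℕ} {T D : Finset (Fin n)}
  {z : Fin n → ℝ}

lemma eq_zero_of_mulVec_eq_zero_of_forall_notMem (hker : A *ᵥ z = 0) (hT : #T ≤ k)
    (hk : ripConst A k < 1) (hz : ∀ j ∉ T, z j = 0) : z = 0 := by
  have hzT : Set.indicator T z = z :=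
    Set.indicator_eq_self.2 fun j hj => by_contra fun h => hj (hz j h)
  have h := one_sub_ripConst_mul_le A hT z
  rw [hzT, hker, dotProduct_zero] at h
  have hsum : ∑ j ∈ T, z j ^ 2 = 0 := by
    have := sum_nonneg fun j (_ : j ∈ T) => sq_nonneg (z j)
    nlinarith
  funext j
  by_cases hj : j ∈ T
  · exact pow_eq_zero_iff two_ne_zero |>.1 <|
      (sum_eq_zero_iff_of_nonneg fun i _ => sq_nonneg (z i)).1 hsum j hj
  · exact hz j hj

lemma one_sub_ripConst_mul_le_abs_add_abs {N : ℕ} {S P Q : Finset (Fin n)}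
    (hker : A *ᵥ z = 0) (hS : #S ≤ N)
    (hsplit : Set.indicator S z + Set.indicator P z + Set.indicator Q z = z) :
    (1 - ripConst A N) * ∑ j ∈ S, z j ^ 2 ≤
      |A *ᵥ Set.indicator S z ⬝ᵥ A *ᵥ Set.indicator P z| +
        |A *ᵥ Set.indicator S z ⬝ᵥ A *ᵥ Set.indicator Q z| :=
  (one_sub_ripConst_mul_le A hS z).trans <| dotProduct_self_le_abs_add_abs <| by
    rw [← mulVec_add, ← mulVec_add, hsplit, hker]

lemma eqOn_zero_of_sum_abs_le (hu : 0 < u) (hker : A *ᵥ z = 0) (hT : #T ≤ k)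
    (hTD : Disjoint T D) (hD : #D ≤ u) (hcone : ∑ j ∈ Tᶜ \ D, |z j| ≤ ∑ j ∈ D, |z j|)
    (hc : ripConst A (2 * u) + ripConst A k + rocConst A (2 * u) k ^ 2 < 1)
    (ha : aConst A k (2 * u) u < 1) : ∀ j ∈ D, z j = 0 := by
  obtain ⟨B, hBE, hB, hblock⟩ := exists_abs_dotProduct_indicator_sdiff_le A hu z (Tᶜ \ D)
  have hDB : #(D ∪ B) ≤ 2 * u := (card_union_le D B).trans (by omega)
  have hDB_T : Disjoint (D ∪ B) T := disjoint_union_left.2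
    ⟨hTD.symm, disjoint_of_subset_left (hBE.trans sdiff_subset) disjoint_compl_left⟩
  have hDB_R : Disjoint (D ∪ B) ((Tᶜ \ D) \ B) := disjoint_union_left.2
    ⟨disjoint_of_subset_right sdiff_subset disjoint_sdiff, disjoint_sdiff⟩
  have hT_R : Disjoint T ((Tᶜ \ D) \ B) :=
    disjoint_of_subset_right (sdiff_subset.trans sdiff_subset) disjoint_compl_right
  have hsplit := indicator_add_indicator_union_add_indicator_sdiff hTD hBE z
  set s := √(∑ j ∈ D ∪ B, z j ^ 2)
  set t := √(∑ j ∈ T, z j ^ 2)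
  set e := (∑ j ∈ Tᶜ \ D, |z j|) / √u
  have hS : (1 - ripConst A (2 * u)) * s ^ 2 ≤
      rocConst A (2 * u) k * s * t + rocConst A u (2 * u) * e * s := by
    rw [Real.sq_sqrt (by positivity)]
    refine (one_sub_ripConst_mul_le_abs_add_abs A hker hDB
      (add_comm (Set.indicator T z) _ ▸ hsplit)).trans
        (add_le_add (abs_dotProduct_le_rocConst A hDB_T hDB hT z z) ?_)
    rw [dotProduct_comm]
    exact hblock _ _ z hDB_R hDB
  have hT' : (1 - ripConst A k) * t ^ 2 ≤
      rocConst A (2 * u) k * s * t + rocConst A u k * e * t := by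
    rw [Real.sq_sqrt (by positivity)]
    refine (one_sub_ripConst_mul_le_abs_add_abs A hker hT hsplit).trans ?_
    rw [dotProduct_comm, dotProduct_comm (A *ᵥ Set.indicator T z)]
    exact add_le_add (abs_dotProduct_le_rocConst A hDB_T hDB hT z z) (hblock _ _ z hT_R hT)
  have hes : e ≤ s := calc
    e ≤ (∑ j ∈ D, |z j|) / √u := div_le_div_of_nonneg_right hcone (Real.sqrt_nonneg _)
    _ ≤ √(∑ j ∈ D, z j ^ 2) := sum_abs_div_sqrt_le_sqrt_sum_sq hD z
    _ ≤ s := Real.sqrt_le_sqrt (sum_le_sum_of_subset_of_nonneg subset_union_left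
      fun _ _ _ => sq_nonneg _)
  have hs0 : s = 0 := eq_zero_of_coupled_bounds
    (by nlinarith [ripConst_nonneg A (2 * u), sq_nonneg (rocConst A (2 * u) k)])
    (aConst_denom_pos A hc) ha (rocConst_nonneg ..) (rocConst_nonneg ..) (rocConst_nonneg ..)
    (Real.sqrt_nonneg _) (Real.sqrt_nonneg _) hes hS hT'
  have hsum : ∑ j ∈ D ∪ B, z j ^ 2 = 0 :=
    (Real.sqrt_eq_zero (sum_nonneg fun _ _ => sq_nonneg _)).1 hs0
  exact fun j hj => pow_eq_zero_iff two_ne_zero |>.1 <|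
    (sum_eq_zero_iff_of_nonneg fun i _ => sq_nonneg (z i)).1 hsum j (mem_union_left B hj)

theorem eq_zero_of_mulVec_eq_zero_of_sum_abs_le (hker : A *ᵥ z = 0) (hT : #T ≤ k)
    (hTD : Disjoint T D) (hD : #D ≤ u) (hcone : ∑ j ∈ Tᶜ \ D, |z j| ≤ ∑ j ∈ D, |z j|)
    (hc : ripConst A (2 * u) + ripConst A k + rocConst A (2 * u) k ^ 2 < 1)
    (ha : aConst A k (2 * u) u < 1) : z = 0 := by
  have hk : ripConst A k < 1 := by
    nlinarith [ripConst_nonneg A (2 * u), sq_nonneg (rocConst A (2 * u) k)]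
  have hzD : ∀ j ∈ D, z j = 0 := by
    rcases u.eq_zero_or_pos with rfl | hu
    · simp [card_eq_zero.1 (Nat.le_zero.1 hD)]
    · exact eqOn_zero_of_sum_abs_le A hu hker hT hTD hD hcone hc ha
  have hzE : ∀ j ∈ Tᶜ \ D, z j = 0 := by
    have hD0 : ∑ j ∈ D, |z j| = 0 := sum_eq_zero fun j hj => by rw [hzD j hj, abs_zero]
    rw [hD0] at hcone
    exact fun j hj => abs_eq_zero.1 <| (sum_eq_zero_iff_of_nonneg fun _ _ => abs_nonneg _).1
      (hcone.antisymm (sum_nonneg fun _ _ => abs_nonneg _)) j hj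
  refine eq_zero_of_mulVec_eq_zero_of_forall_notMem A hker hT hk fun j hj => ?_
  by_cases hjD : j ∈ D
  · exact hzD j hjD
  · exact hzE j (by simp [hj, hjD])

end NullSpace

theorem stmt10_general {m n k u : ℕ} (A : Matrix (Fin m) (Fin n) ℝ)
    (T Δ Δₑ : Finset (Fin n)) (x : Fin n → ℝ)
    (hd : Disjoint T Δ)
    (hT : T.card = k) (hu : Δ.card = u)
    (hsupp : Function.support x = ↑((T ∪ Δ) \ Δₑ))
    (hc1b : ripConst A (2 * u) + ripConst A k + rocConst A k (2 * u) ^ 2 < 1)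
    (hc2 : aConst A k (2 * u) u + aConst A k u u < 1) :
    ∀ β : Fin n → ℝ, A.mulVec β = A.mulVec x → β ≠ x →
      (∑ j ∈ Tᶜ, |x j|) < ∑ j ∈ Tᶜ, |β j| := by
  intro β hAβ hne
  by_contra! hle
  have hc : ripConst A (2 * u) + ripConst A k + rocConst A (2 * u) k ^ 2 < 1 :=
    rocConst_comm A k (2 * u) ▸ hc1b
  have hc' : ripConst A u + ripConst A k + rocConst A u k ^ 2 < 1 := by
    have hu2 : u ≤ 2 * u := by omega
    nlinarith [ripConst_mono A hu2, rocConst_mono_left A (S₂ := k) hu2, rocConst_nonneg A u k]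
  have ha : aConst A k (2 * u) u < 1 := by linarith [aConst_nonneg A hc' u]
  have hx : ∀ j ∈ Tᶜ \ Δ, x j = 0 := fun j hj => by
    by_contra hxj
    have := hsupp ▸ Function.mem_support.2 hxj
    simp_all
  have hz := eq_zero_of_mulVec_eq_zero_of_sum_abs_le A (z := β - x)
    (by rw [mulVec_sub, hAβ, sub_self]) hT.le hd hu.le
    (sum_abs_sub_le_of_sum_abs_le hd hx hle) hc ha
  exact hne (sub_eq_zero.1 hz)

theorem stmt10 {m n k u : ℕ} (A : Matrix (Fin m) (Fin n) ℝ)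
    (T Δ Δₑ : Finset (Fin n)) (x : Fin n → ℝ)
    (hd : Disjoint T Δ) (he : Δₑ ⊆ T)
    (hT : T.card = k) (hu : Δ.card = u)
    (hsupp : Function.support x = ↑((T ∪ Δ) \ Δₑ))
    (hc1a : ripConst A (k + u) < 1)
    (hc1b : ripConst A (2 * u) + ripConst A k + rocConst A k (2 * u) ^ 2 < 1)
    (hc2 : aConst A k (2 * u) u + aConst A k u u < 1) :
    ∀ β : Fin n → ℝ, A.mulVec β = A.mulVec x → β ≠ x →
      (∑ j ∈ Tᶜ, |x j|) < ∑ j ∈ Tᶜ, |β j| :=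
  stmt10_general A T Δ Δₑ x hd hT hu hsupp hc1b hc2
end Indicator
end

section
/- For any matrix A and positive integers S, Š with S + Š ≤ n, the restricted orthogonality constant satisfies θ_{S,Š}(A) ≤ δ_{S+Š}(A). -/
open Matrix BigOperators Finset

noncomputable def extv {n : ℕ} (T : Finset (Fin n)) (c : {j // j ∈ T} → ℝ) : Fin n → ℝ :=
  fun j => if h : j ∈ T then c ⟨j, h⟩ else 0

lemma sum_subtype_ext {n : ℕ} (T : Finset (Fin n)) (c : {j // j ∈ T} → ℝ)
    (f : Fin n → ℝ → ℝ) (hf : ∀ j, f j 0 = 0) :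
    ∑ j : {j // j ∈ T}, f j.1 (c j) = ∑ j, f j (extv T c j) := by
  rw [Finset.univ_eq_attach]
  calc ∑ j ∈ T.attach, f j.1 (c j)
      = ∑ j ∈ T.attach, f j.1 (extv T c j.1) := by
        refine Finset.sum_congr rfl fun j _ => ?_
        simp [extv]
    _ = ∑ j ∈ T, f j (extv T c j) := Finset.sum_attach T (fun j => f j (extv T c j))
    _ = ∑ j, f j (extv T c j) := by
        refine Finset.sum_subset (Finset.subset_univ T) fun x _ hx => ?_
        simp [extv, hx, hf]

lemma mulVec_ext {m n : ℕ} (A : Matrix (Fin m) (Fin n) ℝ) (T : Finset (Fin n))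
    (c : {j // j ∈ T} → ℝ) (i : Fin m) :
    (cols A T).mulVec c i = ∑ j, A i j * extv T c j := by
  have := sum_subtype_ext T c (fun j x => A i j * x) (fun j => mul_zero _)
  simpa [Matrix.mulVec, dotProduct, cols] using this

lemma sumsq_ext {n : ℕ} (T : Finset (Fin n)) (c : {j // j ∈ T} → ℝ) :
    ∑ j : {j // j ∈ T}, c j ^ 2 = ∑ j, extv T c j ^ 2 :=
  sum_subtype_ext T c (fun _ x => x ^ 2) (by simp)

noncomputable def glueV {n : ℕ} (T₁ T₂ : Finset (Fin n)) (c₁ : {j // j ∈ T₁} → ℝ)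
    (c₂ : {j // j ∈ T₂} → ℝ) : {j // j ∈ T₁ ∪ T₂} → ℝ :=
  fun j => if h : j.1 ∈ T₁ then c₁ ⟨j.1, h⟩ else
    c₂ ⟨j.1, ((Finset.mem_union.mp j.2).resolve_left h)⟩

lemma extv_glue {n : ℕ} {T₁ T₂ : Finset (Fin n)} (hd : Disjoint T₁ T₂)
    (c₁ : {j // j ∈ T₁} → ℝ) (c₂ : {j // j ∈ T₂} → ℝ) (j : Fin n) :
    extv (T₁ ∪ T₂) (glueV T₁ T₂ c₁ c₂) j = extv T₁ c₁ j + extv T₂ c₂ j := by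
  by_cases h1 : j ∈ T₁
  · have h2 : j ∉ T₂ := Finset.disjoint_left.mp hd h1
    simp [extv, glueV, h1, h2, Finset.mem_union]
  · by_cases h2 : j ∈ T₂
    · simp [extv, glueV, h1, h2, Finset.mem_union]
    · simp [extv, glueV, h1, h2, Finset.mem_union]

lemma extv_mul_extv_eq_zero {n : ℕ} {T₁ T₂ : Finset (Fin n)} (hd : Disjoint T₁ T₂)
    (c₁ : {j // j ∈ T₁} → ℝ) (c₂ : {j // j ∈ T₂} → ℝ) (j : Fin n) :
    extv T₁ c₁ j * extv T₂ c₂ j = 0 := by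
  by_cases h1 : j ∈ T₁
  · have h2 : j ∉ T₂ := Finset.disjoint_left.mp hd h1
    simp [extv, h2]
  · simp [extv, h1]

lemma extv_smul {n : ℕ} (T : Finset (Fin n)) (c : {j // j ∈ T} → ℝ) (r : ℝ) (j : Fin n) :
    extv T (fun j => r * c j) j = r * extv T c j := by
  unfold extv; split <;> simp

lemma roc_of_rip {m n S S' : ℕ} (A : Matrix (Fin m) (Fin n) ℝ) (δ : ℝ) (hδ : 0 ≤ δ)
    (hrip : RIPBound A (S + S') δ) : ROCBound A S S' δ := by
  intro T₁ T₂ hd h1 h2 c₁ c₂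
  set u : Fin m → ℝ := fun i => (cols A T₁).mulVec c₁ i with hu
  set v : Fin m → ℝ := fun i => (cols A T₂).mulVec c₂ i with hv
  set a : ℝ := l2 c₁ with ha
  set b : ℝ := l2 c₂ with hb
  have ha0 : 0 ≤ a := Real.sqrt_nonneg _
  have hb0 : 0 ≤ b := Real.sqrt_nonneg _
  have ha2 : a ^ 2 = ∑ j, c₁ j ^ 2 := Real.sq_sqrt (Finset.sum_nonneg fun j _ => sq_nonneg _)
  have hb2 : b ^ 2 = ∑ j, c₂ j ^ 2 := Real.sq_sqrt (Finset.sum_nonneg fun j _ => sq_nonneg _)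
  -- degenerate cases
  by_cases hA : a = 0
  · have hc : ∀ j, c₁ j = 0 := by
      intro j
      have h0 : ∑ j, c₁ j ^ 2 = 0 := by rw [← ha2, hA]; ring
      have := (Finset.sum_eq_zero_iff_of_nonneg (fun j _ => sq_nonneg (c₁ j))).mp h0 j
        (Finset.mem_univ j)
      exact pow_eq_zero_iff (n := 2) (by norm_num) |>.mp this
    have hu0 : ∀ i, u i = 0 := by
      intro i
      simp only [hu, Matrix.mulVec, dotProduct]
      exact Finset.sum_eq_zero fun j _ => by rw [hc j, mul_zero]
    have : ∑ i, u i * v i = 0 := Finset.sum_eq_zero fun i _ => by rw [hu0 i, zero_mul]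
    rw [this, hA]
    simp [mul_nonneg (mul_nonneg hδ le_rfl)]
  by_cases hB : b = 0
  · have hc : ∀ j, c₂ j = 0 := by
      intro j
      have h0 : ∑ j, c₂ j ^ 2 = 0 := by rw [← hb2, hB]; ring
      have := (Finset.sum_eq_zero_iff_of_nonneg (fun j _ => sq_nonneg (c₂ j))).mp h0 j
        (Finset.mem_univ j)
      exact pow_eq_zero_iff (n := 2) (by norm_num) |>.mp this
    have hv0 : ∀ i, v i = 0 := by
      intro i
      simp only [hv, Matrix.mulVec, dotProduct]
      exact Finset.sum_eq_zero fun j _ => by rw [hc j, mul_zero]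
    have : ∑ i, u i * v i = 0 := Finset.sum_eq_zero fun i _ => by rw [hv0 i, mul_zero]
    rw [this, hB]
    simp
  have hapos : 0 < a := lt_of_le_of_ne ha0 (Ne.symm hA)
  have hbpos : 0 < b := lt_of_le_of_ne hb0 (Ne.symm hB)
  -- the glued vectors
  have hcard : (T₁ ∪ T₂).card ≤ S + S' :=
    le_trans (Finset.card_union_le T₁ T₂) (add_le_add h1 h2)
  have hue : ∀ i, u i = ∑ j, A i j * extv T₁ c₁ j := fun i => mulVec_ext A T₁ c₁ i
  have hve : ∀ i, v i = ∑ j, A i j * extv T₂ c₂ j := fun i => mulVec_ext A T₂ c₂ i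
  have key : ∀ r s : ℝ,
      (∑ j : {j // j ∈ T₁ ∪ T₂}, (glueV T₁ T₂ (fun j => r * c₁ j) (fun j => s * c₂ j)) j ^ 2
        = r ^ 2 * a ^ 2 + s ^ 2 * b ^ 2) ∧
      (∀ i, (cols A (T₁ ∪ T₂)).mulVec (glueV T₁ T₂ (fun j => r * c₁ j) (fun j => s * c₂ j)) i
        = r * u i + s * v i) := by
    intro r s
    have hg : ∀ j, extv (T₁ ∪ T₂) (glueV T₁ T₂ (fun j => r * c₁ j) (fun j => s * c₂ j)) j
        = r * extv T₁ c₁ j + s * extv T₂ c₂ j := by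
      intro j
      rw [extv_glue hd, extv_smul, extv_smul]
    constructor
    · rw [sumsq_ext]
      have : ∀ j, extv (T₁ ∪ T₂) (glueV T₁ T₂ (fun j => r * c₁ j) (fun j => s * c₂ j)) j ^ 2
          = r ^ 2 * extv T₁ c₁ j ^ 2 + s ^ 2 * extv T₂ c₂ j ^ 2 := by
        intro j
        rw [hg j]
        linear_combination (2 * r * s) * extv_mul_extv_eq_zero hd c₁ c₂ j
      rw [Finset.sum_congr rfl fun j _ => this j, Finset.sum_add_distrib,
        ← Finset.mul_sum, ← Finset.mul_sum, ← sumsq_ext, ← sumsq_ext, ← ha2, ← hb2]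
    · intro i
      rw [mulVec_ext, Finset.sum_congr rfl fun j _ => by rw [hg j], hue i, hve i,
        Finset.mul_sum, Finset.mul_sum, ← Finset.sum_add_distrib]
      exact Finset.sum_congr rfl fun j _ => by ring
  obtain ⟨kP1, kP2⟩ := key b a
  obtain ⟨kM1, kM2⟩ := key b (-a)
  obtain ⟨hlP, hrP⟩ := hrip (T₁ ∪ T₂) hcard (glueV T₁ T₂ (fun j => b * c₁ j) (fun j => a * c₂ j))
  obtain ⟨hlM, hrM⟩ := hrip (T₁ ∪ T₂) hcard (glueV T₁ T₂ (fun j => b * c₁ j) (fun j => (-a) * c₂ j))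
  have eP : ∑ i, ((cols A (T₁ ∪ T₂)).mulVec
      (glueV T₁ T₂ (fun j => b * c₁ j) (fun j => a * c₂ j)) i) ^ 2
      = ∑ i, (b * u i + a * v i) ^ 2 :=
    Finset.sum_congr rfl fun i _ => by rw [kP2 i]
  have eM : ∑ i, ((cols A (T₁ ∪ T₂)).mulVec
      (glueV T₁ T₂ (fun j => b * c₁ j) (fun j => (-a) * c₂ j)) i) ^ 2
      = ∑ i, (b * u i + (-a) * v i) ^ 2 :=
    Finset.sum_congr rfl fun i _ => by rw [kM2 i]
  rw [kP1, eP] at hlP hrP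
  rw [kM1, eM] at hlM hrM
  have ident : ∑ i, (b * u i + a * v i) ^ 2 - ∑ i, (b * u i + (-a) * v i) ^ 2
      = 4 * (a * b) * ∑ i, u i * v i := by
    rw [← Finset.sum_sub_distrib, Finset.mul_sum]
    exact Finset.sum_congr rfl fun i _ => by ring
  rw [abs_le]
  constructor
  · nlinarith [mul_pos hapos hbpos, sq_nonneg (a * b)]
  · nlinarith [mul_pos hapos hbpos, sq_nonneg (a * b)]

lemma rip_nonempty {m n : ℕ} (A : Matrix (Fin m) (Fin n) ℝ) (k : ℕ) :
    RIPBound A k (1 + ∑ i, ∑ j, A i j ^ 2) := by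
  intro T hT c
  have hc : 0 ≤ ∑ j, c j ^ 2 := Finset.sum_nonneg fun j _ => sq_nonneg _
  have hA : 0 ≤ ∑ i, ∑ j, A i j ^ 2 :=
    Finset.sum_nonneg fun i _ => Finset.sum_nonneg fun j _ => sq_nonneg _
  constructor
  · have hR : 0 ≤ ∑ i, ((cols A T).mulVec c i) ^ 2 :=
      Finset.sum_nonneg fun i _ => sq_nonneg _
    nlinarith [mul_nonneg hA hc]
  · have keyi : ∀ i : Fin m, ((cols A T).mulVec c i) ^ 2
        ≤ (∑ j : {j // j ∈ T}, A i j.1 ^ 2) * ∑ j, c j ^ 2 := by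
      intro i
      have := Finset.sum_mul_sq_le_sq_mul_sq Finset.univ (fun j : {j // j ∈ T} => A i j.1) c
      simpa [Matrix.mulVec, dotProduct, cols] using this
    have hsub : ∀ i : Fin m, ∑ j : {j // j ∈ T}, A i j.1 ^ 2 ≤ ∑ j, A i j ^ 2 := by
      intro i
      rw [Finset.univ_eq_attach, Finset.sum_attach T (fun j => A i j ^ 2)]
      exact Finset.sum_le_sum_of_subset_of_nonneg (Finset.subset_univ T)
        fun j _ _ => sq_nonneg _
    calc ∑ i, ((cols A T).mulVec c i) ^ 2
        ≤ ∑ i, (∑ j : {j // j ∈ T}, A i j.1 ^ 2) * ∑ j, c j ^ 2 :=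
          Finset.sum_le_sum fun i _ => keyi i
      _ = (∑ i, ∑ j : {j // j ∈ T}, A i j.1 ^ 2) * ∑ j, c j ^ 2 := by
          rw [Finset.sum_mul]
      _ ≤ (∑ i, ∑ j, A i j ^ 2) * ∑ j, c j ^ 2 := by
          exact mul_le_mul_of_nonneg_right (Finset.sum_le_sum fun i _ => hsub i) hc
      _ ≤ (1 + (1 + ∑ i, ∑ j, A i j ^ 2)) * ∑ j, c j ^ 2 := by nlinarith


theorem stmt12 {m n S S' : ℕ} (A : Matrix (Fin m) (Fin n) ℝ)
    (hS : 0 < S) (hS' : 0 < S') (hn : S + S' ≤ n) :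
    rocConst A S S' ≤ ripConst A (S + S') := by
  apply csInf_le_csInf
  · exact ⟨0, fun θ hθ => hθ.1⟩
  · exact ⟨1 + ∑ i, ∑ j, A i j ^ 2, by positivity, rip_nonempty A _⟩
  · rintro δ ⟨h0, hr⟩
    exact ⟨h0, roc_of_rip A δ h0 hr⟩
end

section
/- Let x be supported on T ∪ Δ (T, Δ disjoint) with x_j ≠ 0 for j ∈ Δ, and let w satisfy wᵀA_j = 0 for j ∈ T, wᵀA_j = sgn(x_j) for j ∈ Δ, and |wᵀA_j| ≤ 1 for j ∉ T ∪ Δ. Then for any β with Aβ = Ax: ‖β_{T^c}‖₁ ≥ ‖x_{T^c}‖₁. -/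
open Matrix BigOperators Finset

theorem stmt17 {m n : ℕ} (A : Matrix (Fin m) (Fin n) ℝ)
    (T Δ : Finset (Fin n)) (hd : Disjoint T Δ)
    (x : Fin n → ℝ) (w : Fin m → ℝ)
    (hsupp : Function.support x ⊆ ↑(T ∪ Δ))
    (hxΔ : ∀ j ∈ Δ, x j ≠ 0)
    (hw1 : ∀ j ∈ T, (∑ i, w i * A i j) = 0)
    (hw2 : ∀ j ∈ Δ, (∑ i, w i * A i j) = Real.sign (x j))
    (hw3 : ∀ j, j ∉ T → j ∉ Δ → |∑ i, w i * A i j| ≤ 1) :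
    ∀ β : Fin n → ℝ, A.mulVec β = A.mulVec x →
      (∑ j ∈ Tᶜ, |x j|) ≤ ∑ j ∈ Tᶜ, |β j| := by
  intro β hβ
  set f : Fin n → ℝ := fun j => ∑ i, w i * A i j with hf
  have key : ∀ v : Fin n → ℝ, ∑ i, w i * A.mulVec v i = ∑ j, f j * v j := by
    intro v
    simp only [Matrix.mulVec, dotProduct, Finset.mul_sum, Finset.sum_mul]
    rw [Finset.sum_comm]
    simp only [hf, Finset.sum_mul]
    exact Finset.sum_congr rfl fun j _ => Finset.sum_congr rfl fun i _ => (mul_assoc _ _ _).symm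
  have heq : ∑ j, f j * β j = ∑ j, f j * x j := by
    rw [← key, ← key, hβ]
  have hsplit : ∀ v : Fin n → ℝ,
      ∑ j, f j * v j = ∑ j ∈ Tᶜ, f j * v j := by
    intro v
    rw [← Finset.sum_add_sum_compl T]
    have : ∑ j ∈ T, f j * v j = 0 :=
      Finset.sum_eq_zero fun j hj => by
        show (∑ i, w i * A i j) * v j = 0
        rw [hw1 j hj, zero_mul]
    rw [this, zero_add]
  have hx : ∑ j ∈ Tᶜ, f j * x j = ∑ j ∈ Tᶜ, |x j| := by
    apply Finset.sum_congr rfl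
    intro j hj
    simp only [Finset.mem_compl] at hj
    by_cases hjΔ : j ∈ Δ
    · show (∑ i, w i * A i j) * x j = |x j|
      rw [hw2 j hjΔ]
      rcases lt_trichotomy (x j) 0 with h|h|h
      · rw [Real.sign_of_neg h, abs_of_neg h]; ring
      · simp [h]
      · rw [Real.sign_of_pos h, abs_of_pos h]; ring
    · have : x j = 0 := by
        by_contra hx0
        have := hsupp hx0
        simp [Finset.mem_union, hj, hjΔ] at this
      show f j * x j = |x j|
      rw [this]; simp
  have hb : ∑ j ∈ Tᶜ, f j * β j ≤ ∑ j ∈ Tᶜ, |β j| := by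
    apply Finset.sum_le_sum
    intro j hj
    simp only [Finset.mem_compl] at hj
    have hfj : |f j| ≤ 1 := by
      show |∑ i, w i * A i j| ≤ 1
      by_cases hjΔ : j ∈ Δ
      · rw [hw2 j hjΔ]
        rcases le_or_gt (x j) 0 with h | h
        · rcases lt_or_eq_of_le h with h | h
          · simp [Real.sign_of_neg h]
          · rw [h, Real.sign_zero]; norm_num
        · simp [Real.sign_of_pos h]
      · exact hw3 j hj hjΔ
    calc f j * β j ≤ |f j * β j| := le_abs_self _
      _ = |f j| * |β j| := abs_mul _ _
      _ ≤ 1 * |β j| := by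
          apply mul_le_mul_of_nonneg_right hfj (abs_nonneg _)
      _ = |β j| := one_mul _
  calc ∑ j ∈ Tᶜ, |x j| = ∑ j ∈ Tᶜ, f j * x j := hx.symm
    _ = ∑ j, f j * x j := (hsplit x).symm
    _ = ∑ j, f j * β j := heq.symm
    _ = ∑ j ∈ Tᶜ, f j * β j := hsplit β
    _ ≤ ∑ j ∈ Tᶜ, |β j| := hb
end
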